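/- Under the setting of the previous propositions, let Z = [[U_k, -B(λ)BE^H, 0]; [0, 0, I_s]] with B(λ) = (I_m - U_kU_k^H)(BB^H - λ I_m)^{-1} and λ ≥ σ̂_1². Then for the unit left singular vector û of A = [B; E] with singular value σ̂_i (i ≤ k, σ̂_i > σ_{k+1}), min_{z ∈ range(Z)} ‖û - z‖ ≤ |γ σ_{k+1}(σ̂_i² - λ)| / (|σ_{k+1}² - σ̂_i²| · |σ_{k+1}² - λ|), where γ = ‖E^H ŷ^{(i)}‖ and ŷ^{(i)} is the bottom block of û. -/

import Mathlib

open Matrix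

noncomputable def l2norm {ι : Type*} [Fintype ι] (w : ι → ℂ) : ℝ :=
  Real.sqrt (∑ i, Complex.normSq (w i))

/-!
Write `t_j = ⟨v_j, Eᴴ y⟩`. The top block of `A Aᴴ û = σ'² û` reads
`(B Bᴴ - σ'²) f = -B Eᴴ y = -∑ σ_j t_j u_j`, so `f = ∑ -σ_j t_j / (σ_j² - σ'²) u_j`, and likewise
`B(λ) B Eᴴ y = ∑_{j > k} σ_j t_j / (σ_j² - λ) u_j`. Choosing the `U_k`-coefficients of `f` and
`w' = w = y` leaves the residual `∑_{j > k} σ_j t_j (λ - σ'²) / ((σ_j² - σ'²)(σ_j² - λ)) u_j`.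
Since `σ_j ≤ σ_{k+1} < σ' ≤ √λ` (the last step by the Rayleigh quotient of `û`), each coefficient
is at most the one at `σ_{k+1}` times `|t_j|`, and Bessel's inequality `∑ |t_j|² ≤ ‖Eᴴ y‖²`
finishes the bound.
-/

section L2

variable {ι κ : Type*} [Fintype ι]

def StarOrthonormal [DecidableEq κ] (u : κ → ι → ℂ) : Prop :=
  ∀ i j, star (u i) ⬝ᵥ u j = if i = j then 1 else 0

lemma StarOrthonormal.star_dotProduct [DecidableEq κ] {u : κ → ι → ℂ} (hu : StarOrthonormal u)
    (i j : κ) : star (u i) ⬝ᵥ u j = if i = j then 1 else 0 :=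
  hu i j

lemma StarOrthonormal.orthonormal_toLp [DecidableEq κ] {u : κ → ι → ℂ}
    (hu : StarOrthonormal u) : Orthonormal ℂ fun i => WithLp.toLp 2 (u i) :=
  orthonormal_iff_ite.2 fun i j => by
    rw [EuclideanSpace.inner_toLp_toLp, dotProduct_comm, hu]

lemma re_star_dotProduct_self (w : ι → ℂ) :
    (star w ⬝ᵥ w).re = ∑ i, Complex.normSq (w i) := by
  simp [dotProduct, Complex.normSq_apply, Complex.re_sum]

lemma l2norm_eq_norm_toLp (w : ι → ℂ) : l2norm w = ‖WithLp.toLp 2 w‖ := by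
  simp [l2norm, EuclideanSpace.norm_eq, Complex.normSq_eq_norm_sq]

lemma l2norm_nonneg (w : ι → ℂ) : 0 ≤ l2norm w := Real.sqrt_nonneg _

lemma l2norm_sumElim_zero [Fintype κ] (w : ι → ℂ) :
    l2norm (Sum.elim w (0 : κ → ℂ)) = l2norm w := by
  simp [l2norm, Fintype.sum_sum_type]

lemma l2norm_sum_smul_of_orthonormal [DecidableEq κ] {u : κ → ι → ℂ} (hu : StarOrthonormal u)
    (s : Finset κ) (c : κ → ℂ) : l2norm (∑ j ∈ s, c j • u j) = √(∑ j ∈ s, ‖c j‖ ^ 2) := by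
  rw [l2norm_eq_norm_toLp, ← hu.orthonormal_toLp.orthogonalFamily.norm_sum c s,
    Real.sqrt_sq (norm_nonneg _)]
  simp [WithLp.toLp_sum, WithLp.toLp_smul]

lemma sum_norm_sq_star_dotProduct_le [DecidableEq κ] {v : κ → ι → ℂ} (hv : StarOrthonormal v)
    (s : Finset κ) (x : ι → ℂ) : ∑ j ∈ s, ‖star (v j) ⬝ᵥ x‖ ^ 2 ≤ l2norm x ^ 2 := by
  rw [l2norm_eq_norm_toLp]
  convert hv.orthonormal_toLp.sum_inner_products_le (WithLp.toLp 2 x) (s := s) using 3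
  rw [EuclideanSpace.inner_toLp_toLp, dotProduct_comm]

lemma l2norm_sum_smul_le_of_norm_le [DecidableEq κ] {m : Type*} [Fintype m] {u : κ → m → ℂ}
    {v : κ → ι → ℂ} (hu : StarOrthonormal u) (hv : StarOrthonormal v) (s : Finset κ)
    (β : κ → ℂ) (x : ι → ℂ) {C : ℝ} (hC : 0 ≤ C)
    (hβ : ∀ j ∈ s, ‖β j‖ ≤ C * ‖star (v j) ⬝ᵥ x‖) :
    l2norm (∑ j ∈ s, β j • u j) ≤ C * l2norm x := by
  rw [l2norm_sum_smul_of_orthonormal hu, Real.sqrt_le_iff]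
  refine ⟨mul_nonneg hC (l2norm_nonneg x), ?_⟩
  calc ∑ j ∈ s, ‖β j‖ ^ 2 ≤ ∑ j ∈ s, C ^ 2 * ‖star (v j) ⬝ᵥ x‖ ^ 2 :=
        Finset.sum_le_sum fun j hj => by
          rw [← mul_pow]; exact pow_le_pow_left₀ (norm_nonneg _) (hβ j hj) 2
    _ = C ^ 2 * ∑ j ∈ s, ‖star (v j) ⬝ᵥ x‖ ^ 2 := (Finset.mul_sum ..).symm
    _ ≤ C ^ 2 * l2norm x ^ 2 := by gcongr; exact sum_norm_sq_star_dotProduct_le hv s x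
    _ = (C * l2norm x) ^ 2 := (mul_pow ..).symm

end L2

section SVD

variable {m n κ : Type*} [Fintype κ]

lemma sum_smul_vecMulVec_mulVec [Fintype n] (c : κ → ℂ) (a : κ → m → ℂ) (b : κ → n → ℂ)
    (x : n → ℂ) :
    (∑ j, c j • vecMulVec (a j) (star (b j))) *ᵥ x = ∑ j, (c j * (star (b j) ⬝ᵥ x)) • a j := by
  simp only [sum_mulVec, smul_mulVec, vecMulVec_mulVec, op_smul_eq_smul, smul_smul]

lemma sum_mul_star_dotProduct_smul_of_orthonormal [Fintype m] [DecidableEq κ] {w : κ → m → ℂ}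
    (hw : StarOrthonormal w) (c : κ → ℂ) (a : κ → n → ℂ) (i : κ) :
    ∑ j, (c j * (star (w j) ⬝ᵥ w i)) • a j = c i • a i := by
  simp [hw.star_dotProduct]

lemma sum_vecMulVec_mulVec_sum_smul [Fintype m] [DecidableEq κ] {u : κ → m → ℂ}
    (hu : StarOrthonormal u) (s : Finset κ) (c : κ → ℂ) :
    (∑ i ∈ s, vecMulVec (u i) (star (u i))) *ᵥ ∑ j, c j • u j = ∑ i ∈ s, c i • u i := by
  simp [sum_mulVec, vecMulVec_mulVec, dotProduct_sum, hu.star_dotProduct]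

variable {B : Matrix m n ℂ} {u : κ → m → ℂ} {v : κ → n → ℂ} {σ : κ → ℝ}

lemma mulVec_eq_sum_of_svd [Fintype n]
    (hB : B = ∑ j, ((σ j : ℝ) : ℂ) • vecMulVec (u j) (star (v j))) (x : n → ℂ) :
    B *ᵥ x = ∑ j, ((σ j : ℂ) * (star (v j) ⬝ᵥ x)) • u j := by
  rw [hB, sum_smul_vecMulVec_mulVec]

lemma conjTranspose_eq_sum_of_svd
    (hB : B = ∑ j, ((σ j : ℝ) : ℂ) • vecMulVec (u j) (star (v j))) :
    Bᴴ = ∑ j, ((σ j : ℝ) : ℂ) • vecMulVec (v j) (star (u j)) := by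
  simp [hB, conjTranspose_sum]

lemma mulVec_right_singular_vector [Fintype n] [DecidableEq κ] (hv : StarOrthonormal v)
    (hB : B = ∑ j, ((σ j : ℝ) : ℂ) • vecMulVec (u j) (star (v j))) (i : κ) :
    B *ᵥ v i = (σ i : ℂ) • u i := by
  rw [mulVec_eq_sum_of_svd hB, sum_mul_star_dotProduct_smul_of_orthonormal hv]

lemma conjTranspose_mulVec_left_singular_vector [Fintype m] [DecidableEq κ]
    (hu : StarOrthonormal u)
    (hB : B = ∑ j, ((σ j : ℝ) : ℂ) • vecMulVec (u j) (star (v j))) (i : κ) :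
    Bᴴ *ᵥ u i = (σ i : ℂ) • v i := by
  rw [conjTranspose_eq_sum_of_svd hB, sum_smul_vecMulVec_mulVec,
    sum_mul_star_dotProduct_smul_of_orthonormal hu]

variable [Fintype m] [DecidableEq m] [Fintype n] [DecidableEq κ]

structure IsSVD (B : Matrix m n ℂ) (u : κ → m → ℂ) (v : κ → n → ℂ) (σ : κ → ℝ) : Prop where
  left : StarOrthonormal u
  right : StarOrthonormal v
  eq_sum : B = ∑ j, ((σ j : ℝ) : ℂ) • vecMulVec (u j) (star (v j))

lemma gram_sub_smul_mulVec_left_singular_vector (h : IsSVD B u v σ) (μ : ℂ) (i : κ) :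
    (B * Bᴴ - μ • 1) *ᵥ u i = ((σ i : ℂ) ^ 2 - μ) • u i := by
  rw [sub_mulVec, ← mulVec_mulVec, conjTranspose_mulVec_left_singular_vector h.left h.eq_sum,
    mulVec_smul, mulVec_right_singular_vector h.right h.eq_sum, smul_mulVec, one_mulVec,
    smul_smul, sub_smul, sq]

lemma sq_sub_ne_zero_of_isUnit_gram_sub_smul (h : IsSVD B u v σ) {μ : ℂ}
    (hM : IsUnit (B * Bᴴ - μ • 1)) (i : κ) : (σ i : ℂ) ^ 2 - μ ≠ 0 := by
  intro hμ
  have hui : u i ≠ 0 := fun hui => by simpa [hui] using h.left i i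
  apply hui
  apply mulVec_injective_iff_isUnit.2 hM
  rw [gram_sub_smul_mulVec_left_singular_vector h, hμ, zero_smul, mulVec_zero]

lemma inv_gram_sub_smul_mulVec_sum (h : IsSVD B u v σ) {μ : ℂ}
    (hM : IsUnit (B * Bᴴ - μ • 1)) (c : κ → ℂ) :
    (B * Bᴴ - μ • 1)⁻¹ *ᵥ ∑ j, c j • u j = ∑ j, (c j / ((σ j : ℂ) ^ 2 - μ)) • u j := by
  apply mulVec_injective_iff_isUnit.2 hM
  rw [mulVec_mulVec, mul_nonsing_inv _ ((isUnit_iff_isUnit_det _).1 hM), one_mulVec, mulVec_sum]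
  refine Finset.sum_congr rfl fun j _ => ?_
  rw [mulVec_smul, gram_sub_smul_mulVec_left_singular_vector h, smul_smul,
    div_mul_cancel₀ _ (sq_sub_ne_zero_of_isUnit_gram_sub_smul h hM j)]

lemma eq_sum_of_mulVec_conjTranspose_add_eq_smul (h : IsSVD B u v σ) {μ : ℂ}
    (hM : IsUnit (B * Bᴴ - μ • 1)) {f : m → ℂ} {w : n → ℂ}
    (hf : B *ᵥ (Bᴴ *ᵥ f + w) = μ • f) :
    f = ∑ j, (-((σ j : ℂ) * (star (v j) ⬝ᵥ w)) / ((σ j : ℂ) ^ 2 - μ)) • u j := by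
  have hMf : (B * Bᴴ - μ • 1) *ᵥ f = ∑ j, (-((σ j : ℂ) * (star (v j) ⬝ᵥ w))) • u j := by
    rw [sub_mulVec, ← mulVec_mulVec, smul_mulVec, one_mulVec, ← hf, mulVec_add,
      mulVec_eq_sum_of_svd h.eq_sum w]
    simp only [neg_smul, Finset.sum_neg_distrib]
    abel
  rw [← inv_gram_sub_smul_mulVec_sum h hM, ← hMf, mulVec_mulVec,
    nonsing_inv_mul _ ((isUnit_iff_isUnit_det _).1 hM), one_mulVec]

lemma one_sub_proj_mul_inv_gram_sub_smul_mul_mulVec (h : IsSVD B u v σ) {μ : ℂ}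
    (hM : IsUnit (B * Bᴴ - μ • 1)) (s : Finset κ) (x : n → ℂ) :
    ((1 - ∑ i ∈ s, vecMulVec (u i) (star (u i))) * (B * Bᴴ - μ • 1)⁻¹ * B) *ᵥ x =
      ∑ j ∈ sᶜ, ((σ j : ℂ) * (star (v j) ⬝ᵥ x) / ((σ j : ℂ) ^ 2 - μ)) • u j := by
  rw [← mulVec_mulVec, ← mulVec_mulVec, mulVec_eq_sum_of_svd h.eq_sum,
    inv_gram_sub_smul_mulVec_sum h hM, sub_mulVec, one_mulVec,
    sum_vecMulVec_mulVec_sum_smul h.left, ← Finset.sum_compl_add_sum s, add_sub_cancel_right]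

lemma sum_smul_sub_enhanced_basis_vector (h : IsSVD B u v σ) {μ : ℂ}
    (hM : IsUnit (B * Bᴴ - μ • 1)) (s : Finset κ) (α : κ → ℂ) (x : n → ℂ) :
    ∑ j, α j • u j - (∑ j ∈ s, α j • u j +
        (-((1 - ∑ i ∈ s, vecMulVec (u i) (star (u i))) * (B * Bᴴ - μ • 1)⁻¹ * B)) *ᵥ x) =
      ∑ j ∈ sᶜ, (α j + (σ j : ℂ) * (star (v j) ⬝ᵥ x) / ((σ j : ℂ) ^ 2 - μ)) • u j := by
  rw [neg_mulVec, one_sub_proj_mul_inv_gram_sub_smul_mul_mulVec h hM,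
    ← Finset.sum_compl_add_sum s]
  simp only [add_smul, Finset.sum_add_distrib]
  abel

end SVD

lemma sum_castLE_eq_sum_map_castLEEmb {M : Type*} [AddCommMonoid M] {k N : ℕ} (h : k ≤ N)
    (F : Fin N → M) :
    ∑ i : Fin k, F (Fin.castLE h i) = ∑ j ∈ Finset.univ.map (Fin.castLEEmb h), F j :=
  (Finset.sum_map Finset.univ (Fin.castLEEmb h) F).symm

lemma le_of_notMem_map_castLEEmb {k N : ℕ} (h : k < N) {j : Fin N}
    (hj : j ∉ Finset.univ.map (Fin.castLEEmb h.le)) : (⟨k, h⟩ : Fin N) ≤ j := by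
  by_contra! hjk
  exact hj (Finset.mem_map.2 ⟨⟨j, hjk⟩, Finset.mem_univ _, rfl⟩)

lemma le_of_rayleigh_le {ι : Type*} [Fintype ι] {M : Matrix ι ι ℂ} {w : ι → ℂ} {μ lam : ℝ}
    (hw : 0 < (star w ⬝ᵥ w).re) (hMw : M *ᵥ w = (μ : ℂ) • w)
    (h : (star w ⬝ᵥ (M *ᵥ w)).re ≤ lam * (star w ⬝ᵥ w).re) : μ ≤ lam := by
  rw [hMw, dotProduct_smul, smul_eq_mul, Complex.re_ofReal_mul] at h
  exact le_of_mul_le_mul_right h hw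

lemma mulVec_conjTranspose_add_eq_smul_of_fromRows {m n s : Type*} [Fintype n] [Fintype m]
    [Fintype s] {B : Matrix m n ℂ} {E : Matrix s n ℂ} {f : m → ℂ} {y : s → ℂ} {μ : ℂ}
    (h : (fromRows B E * (fromRows B E)ᴴ) *ᵥ Sum.elim f y = μ • Sum.elim f y) :
    B *ᵥ (Bᴴ *ᵥ f + Eᴴ *ᵥ y) = μ • f := by
  rw [← mulVec_mulVec, conjTranspose_fromRows_eq_fromCols_conjTranspose,
    fromCols_mulVec_sumElim, fromRows_mulVec] at h
  ext i
  simpa using congrFun h (Sum.inl i)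

lemma abs_mul_sub_div_le_of_le {x y a b : ℝ} (hx : 0 ≤ x) (hxy : x ≤ y) (hya : y ^ 2 < a)
    (hab : a ≤ b) :
    |x * (a - b)| / (|x ^ 2 - a| * |x ^ 2 - b|) ≤ |y * (a - b)| / (|y ^ 2 - a| * |y ^ 2 - b|) := by
  have hxy2 : x ^ 2 ≤ y ^ 2 := pow_le_pow_left₀ hx hxy 2
  rw [abs_mul, abs_mul, abs_of_nonneg hx, abs_of_nonneg (hx.trans hxy),
    abs_of_nonpos (by linarith : x ^ 2 - a ≤ 0), abs_of_nonpos (by linarith : x ^ 2 - b ≤ 0),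
    abs_of_nonpos (by linarith : y ^ 2 - a ≤ 0), abs_of_nonpos (by linarith : y ^ 2 - b ≤ 0)]
  apply div_le_div₀ (mul_nonneg (hx.trans hxy) (abs_nonneg _)) (by gcongr) (by nlinarith)
  nlinarith

lemma norm_neg_div_add_div {x a b : ℝ} (t : ℂ) (ha : x ^ 2 ≠ a) (hb : x ^ 2 ≠ b) :
    ‖-((x : ℂ) * t) / ((x : ℂ) ^ 2 - a) + (x : ℂ) * t / ((x : ℂ) ^ 2 - b)‖ =
      |x * (a - b)| / (|x ^ 2 - a| * |x ^ 2 - b|) * ‖t‖ := by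
  have : -((x : ℂ) * t) / ((x : ℂ) ^ 2 - a) + (x : ℂ) * t / ((x : ℂ) ^ 2 - b) =
      -((x * (a - b) / ((x ^ 2 - a) * (x ^ 2 - b)) : ℝ) : ℂ) * t := by
    have ha' : (x : ℂ) ^ 2 - a ≠ 0 := sub_ne_zero.2 (by exact_mod_cast ha)
    have hb' : (x : ℂ) ^ 2 - b ≠ 0 := sub_ne_zero.2 (by exact_mod_cast hb)
    push_cast
    field_simp
    ring
  rw [this, norm_mul, norm_neg, Complex.norm_real, Real.norm_eq_abs, abs_div, abs_mul, abs_mul]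

lemma norm_neg_div_add_div_le {x y a b : ℝ} (t : ℂ) (hx : 0 ≤ x) (hxy : x ≤ y)
    (hya : y ^ 2 < a) (hab : a ≤ b) :
    ‖-((x : ℂ) * t) / ((x : ℂ) ^ 2 - a) + (x : ℂ) * t / ((x : ℂ) ^ 2 - b)‖ ≤
      |y * (a - b)| / (|y ^ 2 - a| * |y ^ 2 - b|) * ‖t‖ := by
  have hxa : x ^ 2 < a := (pow_le_pow_left₀ hx hxy 2).trans_lt hya
  rw [norm_neg_div_add_div t hxa.ne (by linarith)]
  exact mul_le_mul_of_nonneg_right (abs_mul_sub_div_le_of_le hx hxy hya hab) (norm_nonneg t)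

theorem distance_bound_enhanced_basis_general {m n s k : ℕ}
    (B : Matrix (Fin m) (Fin n) ℂ) (E : Matrix (Fin s) (Fin n) ℂ)
    (A : Matrix (Fin m ⊕ Fin s) (Fin n) ℂ) (hA : A = fromRows B E)
    (u : Fin (Nat.min m n) → Fin m → ℂ) (v : Fin (Nat.min m n) → Fin n → ℂ)
    (σ : Fin (Nat.min m n) → ℝ)
    (hu : ∀ i j, star (u i) ⬝ᵥ u j = if i = j then 1 else 0)
    (hv : ∀ i j, star (v i) ⬝ᵥ v j = if i = j then 1 else 0)
    (hB : B = ∑ j, ((σ j : ℝ) : ℂ) • vecMulVec (u j) (star (v j)))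
    (hσanti : Antitone σ) (hσnn : ∀ j, 0 ≤ σ j)
    (hkm : k < Nat.min m n)
    (σ' : ℝ) (f : Fin m → ℂ) (y : Fin s → ℂ)
    (hinv : IsUnit (B * Bᴴ - ((σ' : ℂ) ^ 2) • (1 : Matrix (Fin m) (Fin m) ℂ)))
    (hunit : ∑ i, Complex.normSq (Sum.elim f y i) = 1)
    (hsv : (A * Aᴴ) *ᵥ Sum.elim f y = ((σ' : ℂ) ^ 2) • Sum.elim f y)
    (hgap : σ ⟨k, hkm⟩ < σ')
    (lam : ℝ)
    (hlam : ∀ w : Fin m ⊕ Fin s → ℂ,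
      (star w ⬝ᵥ ((A * Aᴴ) *ᵥ w)).re ≤ lam * (star w ⬝ᵥ w).re)
    (hinvlam : IsUnit (B * Bᴴ - ((lam : ℝ) : ℂ) • (1 : Matrix (Fin m) (Fin m) ℂ)))
    (P Blam : Matrix (Fin m) (Fin m) ℂ)
    (hP : P = ∑ j : Fin k,
      vecMulVec (u (Fin.castLE hkm.le j)) (star (u (Fin.castLE hkm.le j))))
    (hBlam : Blam = (1 - P) *
      (B * Bᴴ - ((lam : ℝ) : ℂ) • (1 : Matrix (Fin m) (Fin m) ℂ))⁻¹) :
    sInf {d : ℝ | ∃ (c : Fin k → ℂ) (w' : Fin s → ℂ) (w : Fin s → ℂ),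
        d = l2norm (Sum.elim f y -
          Sum.elim (∑ j : Fin k, c j • u (Fin.castLE hkm.le j) +
            (-(Blam * B * Eᴴ)) *ᵥ w') w)} ≤
      |l2norm (Eᴴ *ᵥ y) * σ ⟨k, hkm⟩ * (σ' ^ 2 - lam)| /
        (|(σ ⟨k, hkm⟩) ^ 2 - σ' ^ 2| * |(σ ⟨k, hkm⟩) ^ 2 - lam|) := by
  set S := Finset.univ.map (Fin.castLEEmb hkm.le)
  set t := fun j => star (v j) ⬝ᵥ (Eᴴ *ᵥ y)
  set α := fun j => -((σ j : ℂ) * t j) / ((σ j : ℂ) ^ 2 - (σ' : ℂ) ^ 2)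
  have hsvd : IsSVD B u v σ := ⟨hu, hv, hB⟩
  have hf : f = ∑ j, α j • u j :=
    eq_sum_of_mulVec_conjTranspose_add_eq_smul hsvd hinv
      (mulVec_conjTranspose_add_eq_smul_of_fromRows (hA ▸ hsv))
  have hres : Sum.elim f y - Sum.elim (∑ i : Fin k, α (Fin.castLE hkm.le i) •
      u (Fin.castLE hkm.le i) + (-(Blam * B * Eᴴ)) *ᵥ y) y =
      Sum.elim (∑ j ∈ Sᶜ, (α j + (σ j : ℂ) * t j / ((σ j : ℂ) ^ 2 - (lam : ℂ))) • u j) 0 := by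
    rw [← Sum.elim_sub_sub, sub_self, hf, hBlam, hP,
      sum_castLE_eq_sum_map_castLEEmb hkm.le fun j => α j • u j,
      sum_castLE_eq_sum_map_castLEEmb hkm.le fun i => vecMulVec (u i) (star (u i)),
      neg_mulVec, ← mulVec_mulVec, ← neg_mulVec, sum_smul_sub_enhanced_basis_vector hsvd hinvlam]
  have hlam' : σ' ^ 2 ≤ lam := by
    refine le_of_rayleigh_le (M := A * Aᴴ) (w := Sum.elim f y) ?_ ?_ (hlam _)
    · rw [re_star_dotProduct_self, hunit]; exact one_pos
    · rw [hsv]; push_cast; rfl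
  have hσk : σ ⟨k, hkm⟩ ^ 2 < σ' ^ 2 := pow_lt_pow_left₀ hgap (hσnn _) two_ne_zero
  refine csInf_le_of_le ⟨0, fun _ ⟨_, _, _, hd⟩ => hd ▸ l2norm_nonneg _⟩
    ⟨fun i => α (Fin.castLE hkm.le i), y, y, rfl⟩ ?_
  rw [hres, l2norm_sumElim_zero, mul_assoc, abs_mul, abs_of_nonneg (l2norm_nonneg _),
    mul_div_assoc, mul_comm]
  refine l2norm_sum_smul_le_of_norm_le hu hv _ _ _ (by positivity) fun j hj => ?_
  have hcoef := norm_neg_div_add_div_le (t j) (hσnn j)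
    (hσanti (le_of_notMem_map_castLEEmb hkm (Finset.mem_compl.1 hj))) hσk hlam'
  push_cast at hcoef
  exact hcoef

/-- Proposition 5: with the enhanced basis `Z = [[U_k, -B(λ)BEᴴ, 0], [0, 0, I_s]]` and
`λ ≥ σ̂₁²`, the distance of a unit left singular vector `û = [f; y]` of `A = [B; E]` with
singular value `σ' > σ_{k+1}` from `range(Z)` is bounded by
`|γ σ_{k+1}(σ'² - λ)| / (|σ_{k+1}² - σ'²|·|σ_{k+1}² - λ|)`, `γ = ‖Eᴴ y‖`. -/
theorem distance_bound_enhanced_basis {m n s k : ℕ}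
    (B : Matrix (Fin m) (Fin n) ℂ) (E : Matrix (Fin s) (Fin n) ℂ)
    (A : Matrix (Fin m ⊕ Fin s) (Fin n) ℂ) (hA : A = fromRows B E)
    (u : Fin (Nat.min m n) → Fin m → ℂ) (v : Fin (Nat.min m n) → Fin n → ℂ)
    (σ : Fin (Nat.min m n) → ℝ)
    (hu : ∀ i j, star (u i) ⬝ᵥ u j = if i = j then 1 else 0)
    (hv : ∀ i j, star (v i) ⬝ᵥ v j = if i = j then 1 else 0)
    (hB : B = ∑ j, ((σ j : ℝ) : ℂ) • vecMulVec (u j) (star (v j)))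
    (hσanti : Antitone σ) (hσnn : ∀ j, 0 ≤ σ j)
    (hkm : k < Nat.min m n)
    (σ' : ℝ) (f : Fin m → ℂ) (y : Fin s → ℂ)
    (hne : ∀ j, σ' ^ 2 ≠ (σ j) ^ 2)
    (hinv : IsUnit (B * Bᴴ - ((σ' : ℂ) ^ 2) • (1 : Matrix (Fin m) (Fin m) ℂ)))
    (hunit : ∑ i, Complex.normSq (Sum.elim f y i) = 1)
    (hsv : (A * Aᴴ) *ᵥ Sum.elim f y = ((σ' : ℂ) ^ 2) • Sum.elim f y)
    (hgap : σ ⟨k, hkm⟩ < σ')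
    (lam : ℝ)
    (hlam : ∀ w : Fin m ⊕ Fin s → ℂ,
      (star w ⬝ᵥ ((A * Aᴴ) *ᵥ w)).re ≤ lam * (star w ⬝ᵥ w).re)
    (hinvlam : IsUnit (B * Bᴴ - ((lam : ℝ) : ℂ) • (1 : Matrix (Fin m) (Fin m) ℂ)))
    (P Blam : Matrix (Fin m) (Fin m) ℂ)
    (hP : P = ∑ j : Fin k,
      vecMulVec (u (Fin.castLE hkm.le j)) (star (u (Fin.castLE hkm.le j))))
    (hBlam : Blam = (1 - P) *
      (B * Bᴴ - ((lam : ℝ) : ℂ) • (1 : Matrix (Fin m) (Fin m) ℂ))⁻¹) :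
    sInf {d : ℝ | ∃ (c : Fin k → ℂ) (w' : Fin s → ℂ) (w : Fin s → ℂ),
        d = l2norm (Sum.elim f y -
          Sum.elim (∑ j : Fin k, c j • u (Fin.castLE hkm.le j) +
            (-(Blam * B * Eᴴ)) *ᵥ w') w)} ≤
      |l2norm (Eᴴ *ᵥ y) * σ ⟨k, hkm⟩ * (σ' ^ 2 - lam)| /
        (|(σ ⟨k, hkm⟩) ^ 2 - σ' ^ 2| * |(σ ⟨k, hkm⟩) ^ 2 - lam|) :=
  distance_bound_enhanced_basis_general B E A hA u v σ hu hv hB hσanti hσnn hkm σ' f y hinv hunit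
    hsv hgap lam hlam hinvlam P Blam hP hBlam
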